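/- arXiv:2105.02308 — 5 statements merged into one kernel-verified Lean document; each statement's English description precedes it below -/
import Mathlib

section
/- Let f ∈ Γ₀(H) with int dom f ≠ ∅ and f Gâteaux differentiable on int dom f. Let C ⊆ H be closed convex with C ∩ int dom f ≠ ∅, let (x_k) in int dom f be forward Bregman monotone with respect to C, and let y, z ∈ C ∩ int dom f. Then the limit lim_{k→∞} ⟨∇f(y) - ∇f(z), x_k⟩ exists (is a convergent real sequence). -/
open Filter Topology
open scoped RealInnerProductSpace

variable {H : Type*} [NormedAddCommGroup H] [InnerProductSpace ℝ H] [CompleteSpace H]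

/-- Gâteaux differentiability of `f` at `x` with Gâteaux gradient `u`. -/
def GateauxAt (f : H → ℝ) (u x : H) : Prop :=
  ∀ v : H, Tendsto (fun t : ℝ => (f (x + t • v) - f x) / t) (𝓝[≠] (0:ℝ)) (𝓝 ⟪u, v⟫)

/-- The Bregman distance associated with `f` (with gradient `g`), as a real number,
for `x` in the domain and `y` in the interior of the domain. -/
noncomputable def bregD (f : H → ℝ) (g : H → H) (x y : H) : ℝ :=
  f x - f y - ⟪g y, x - y⟫

/-- The subdifferential of `f` (viewed as `+∞` outside `dom`) at `x`. -/
def subdiff (f : H → ℝ) (dom : Set H) (x : H) : Set H :=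
  {u : H | x ∈ dom ∧ ∀ y ∈ dom, f x + ⟪u, y - x⟫ ≤ f y}

/-- `f` is essentially strictly convex: `(∂f)⁻¹` is locally bounded on its domain and
`f` is strictly convex on every convex subset of `dom ∂f`. -/
def EssStrictConvex (f : H → ℝ) (dom : Set H) : Prop :=
  (∀ u : H, {x : H | u ∈ subdiff f dom x}.Nonempty →
      ∃ δ : ℝ, 0 < δ ∧
        Bornology.IsBounded {x : H | ∃ v ∈ Metric.closedBall u δ, v ∈ subdiff f dom x}) ∧
  ∀ s : Set H, s ⊆ {x : H | (subdiff f dom x).Nonempty} → Convex ℝ s → StrictConvexOn ℝ s f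

/-- A sequence `x` in `interior dom` is forward Bregman monotone with respect to `C`. -/
def FwdBregmanMono (f : H → ℝ) (g : H → H) (dom C : Set H) (x : ℕ → H) : Prop :=
  (C ∩ interior dom).Nonempty ∧ (∀ k : ℕ, x k ∈ interior dom) ∧
    ∀ c ∈ C ∩ interior dom, ∀ k : ℕ, bregD f g (x (k+1)) c ≤ bregD f g (x k) c

/-- Weak convergence of a sequence in a Hilbert space. -/
def WeakLim (x : ℕ → H) (p : H) : Prop :=
  ∀ u : H, Tendsto (fun k => ⟪x k, u⟫) atTop (𝓝 ⟪p, u⟫)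

lemma grad_ineq (f : H → ℝ) (dom : Set H) (hconv : ConvexOn ℝ dom f)
    {u y : H} (hy : y ∈ dom) (hg : GateauxAt f u y) {w : H} (hw : w ∈ dom) :
    ⟪u, w - y⟫ ≤ f w - f y := by
  have hsub : Set.Ioi (0:ℝ) ⊆ {(0:ℝ)}ᶜ := fun t ht => ne_of_gt ht
  have h := (hg (w - y)).mono_left (nhdsWithin_mono (0:ℝ) hsub)
  refine le_of_tendsto h ?_
  filter_upwards [Ioo_mem_nhdsGT_of_mem (Set.mem_Ico.mpr ⟨le_refl 0, one_pos⟩)] with t ht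
  obtain ⟨ht0, ht1⟩ : (0:ℝ) < t ∧ t < 1 := ht
  have hmem : y + t • (w - y) = t • w + (1 - t) • y := by module
  have := hconv.2 hw hy (show (0:ℝ) ≤ t from ht0.le) (show (0:ℝ) ≤ 1 - t by linarith) (show t + (1 - t) = 1 by ring)
  rw [div_le_iff₀ ht0]
  calc f (y + t • (w - y)) - f y ≤ t * f w + (1 - t) * f y - f y := by
        rw [hmem]; simp only [smul_eq_mul] at this; linarith [this]
    _ = (f w - f y) * t := by ring

theorem stmt2 (f : H → ℝ) (g : H → H) (dom : Set H) (C : Set H)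
    (hdomConv : Convex ℝ dom) (hconv : ConvexOn ℝ dom f)
    (hlsc : LowerSemicontinuousOn f dom) (hproper : dom.Nonempty)
    (hint : (interior dom).Nonempty)
    (hdiff : ∀ x ∈ interior dom, GateauxAt f (g x) x)
    (hC : IsClosed C) (hCconv : Convex ℝ C) (hCne : (C ∩ interior dom).Nonempty)
    (x : ℕ → H) (hmono : FwdBregmanMono f g dom C x)
    (y z : H) (hy : y ∈ C ∩ interior dom) (hz : z ∈ C ∩ interior dom) :
    ∃ l : ℝ, Tendsto (fun k : ℕ => ⟪g y - g z, x k⟫) atTop (𝓝 l) := by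
  obtain ⟨-, hxmem, hstep⟩ := hmono
  set a : ℕ → ℝ := fun k => bregD f g (x k) y with ha_def
  set b : ℕ → ℝ := fun k => bregD f g (x k) z with hb_def
  have hnn : ∀ (c : H), c ∈ interior dom → ∀ k, 0 ≤ bregD f g (x k) c := by
    intro c hc k
    have := grad_ineq f dom hconv (interior_subset hc) (hdiff c hc)
      (interior_subset (hxmem k))
    simp only [bregD]; linarith
  have hconv_of : ∀ (c : H), c ∈ C ∩ interior dom →
      ∃ l : ℝ, Tendsto (fun k => bregD f g (x k) c) atTop (𝓝 l) := by
    intro c hc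
    have hanti : Antitone (fun k => bregD f g (x k) c) :=
      antitone_nat_of_succ_le (hstep c hc)
    have hbdd : BddBelow (Set.range fun k => bregD f g (x k) c) := by
      refine ⟨0, ?_⟩
      rintro r ⟨k, rfl⟩
      exact hnn c hc.2 k
    exact ⟨_, tendsto_atTop_ciInf hanti hbdd⟩
  obtain ⟨la, hla⟩ := hconv_of y hy
  obtain ⟨lb, hlb⟩ := hconv_of z hz
  refine ⟨lb - la + (f z - f y + ⟪g y, y⟫ - ⟪g z, z⟫), ?_⟩
  have key : ∀ w : H, ⟪g y - g z, w⟫ =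
      bregD f g w z - bregD f g w y + (f z - f y + ⟪g y, y⟫ - ⟪g z, z⟫) := by
    intro w
    simp only [bregD, inner_sub_left, inner_sub_right]
    ring
  have := ((hlb.sub hla).add_const (f z - f y + ⟪g y, y⟫ - ⟪g z, z⟫))
  exact this.congr fun k => (key (x k)).symm
end

section
/- Let f ∈ Γ₀(H) with int dom f ≠ ∅, Gâteaux differentiable on int dom f and essentially strictly convex. Let C ⊆ H be closed convex with C ∩ int dom f ≠ ∅ and let (x_k) in int dom f be forward Bregman monotone with respect to C. Then (x_k) is bounded. -/
open Filter Topology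
open scoped RealInnerProductSpace

variable {H : Type*} [NormedAddCommGroup H] [InnerProductSpace ℝ H] [CompleteSpace H]

set_option linter.unusedSectionVars false
set_option linter.unusedVariables false
set_option linter.unusedTactic false

lemma ekeland_aux {s : Set H} (hs : IsClosed s) (h : H → ℝ)
    (hlsc : LowerSemicontinuousOn h s) (h0 : ∀ y ∈ s, 0 ≤ h y)
    {z : H} (hz : z ∈ s) {ε κ : ℝ} (hκ : 0 < κ) (hzε : h z ≤ ε) :
    ∃ p ∈ s, h p ≤ h z ∧ dist p z ≤ ε / κ ∧ ∀ y ∈ s, h p - κ * dist y p ≤ h y := by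
  have hstep : ∀ p : H, ∃ q : H, p ∈ s →
      q ∈ s ∧ (h q + κ * dist q p ≤ h p) ∧
        h q ≤ (h p + sInf (h '' {y | y ∈ s ∧ h y + κ * dist y p ≤ h p})) / 2 := by
    intro p
    by_cases hp : p ∈ s
    · set S := {y | y ∈ s ∧ h y + κ * dist y p ≤ h p} with hS
      have hpS : p ∈ S := ⟨hp, by simp⟩
      have hbdd : BddBelow (h '' S) := by
        refine ⟨0, ?_⟩
        rintro v ⟨y, hy, rfl⟩
        exact h0 y hy.1
      have hip : sInf (h '' S) ≤ h p := csInf_le hbdd ⟨p, hpS, rfl⟩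
      by_cases heq : h p ≤ sInf (h '' S)
      · exact ⟨p, fun _ => ⟨hp, by simp, by linarith⟩⟩
      · push_neg at heq
        have hlt : sInf (h '' S) < (h p + sInf (h '' S)) / 2 := by linarith
        obtain ⟨v, ⟨y, hyS, rfl⟩, hv⟩ :=
          exists_lt_of_csInf_lt (Set.Nonempty.image h ⟨p, hpS⟩) hlt
        exact ⟨y, fun _ => ⟨hyS.1, hyS.2, hv.le⟩⟩
    · exact ⟨p, fun hc => absurd hc hp⟩
  choose F hF using hstep
  set q : ℕ → H := fun n => F^[n] z with hq
  have hq0 : q 0 = z := rfl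
  have hqsucc : ∀ n, q (n + 1) = F (q n) := by
    intro n; simp [hq, Function.iterate_succ_apply']
  have hmem : ∀ n, q n ∈ s := by
    intro n; induction n with
    | zero => exact hz
    | succ n ih => rw [hqsucc]; exact (hF (q n) ih).1
  have hdec : ∀ n, h (q (n + 1)) + κ * dist (q (n + 1)) (q n) ≤ h (q n) := by
    intro n; rw [hqsucc]; exact (hF (q n) (hmem n)).2.1
  have hinf : ∀ n, h (q (n + 1)) ≤
      (h (q n) + sInf (h '' {y | y ∈ s ∧ h y + κ * dist y (q n) ≤ h (q n)})) / 2 := by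
    intro n; rw [hqsucc]; exact (hF (q n) (hmem n)).2.2
  have hchain : ∀ n m, n ≤ m → h (q m) + κ * dist (q m) (q n) ≤ h (q n) := by
    intro n m hnm
    induction m, hnm using Nat.le_induction with
    | base => simp
    | succ m hnm ih =>
      have h1 := hdec m
      have htri : dist (q (m + 1)) (q n) ≤ dist (q (m + 1)) (q m) + dist (q m) (q n) :=
        dist_triangle _ _ _
      nlinarith [dist_nonneg (x := q (m+1)) (y := q m), dist_nonneg (x := q m) (y := q n)]
  have hanti : Antitone (fun n => h (q n)) := by
    intro n m hnm
    have := hchain n m hnm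
    nlinarith [dist_nonneg (x := q m) (y := q n)]
  have hbdd : BddBelow (Set.range fun n => h (q n)) :=
    ⟨0, by rintro v ⟨n, rfl⟩; exact h0 _ (hmem n)⟩
  set L := ⨅ n, h (q n) with hL
  have hLtend : Tendsto (fun n => h (q n)) atTop (𝓝 L) := tendsto_atTop_ciInf hanti hbdd
  have hLle : ∀ n, L ≤ h (q n) := fun n => ciInf_le hbdd n
  have hcauchy : CauchySeq q := by
    apply cauchySeq_of_le_tendsto_0 (fun n => (h (q n) - L) / κ)
    · intro n m N hn hm
      rcases le_total n m with hle | hle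
      · have := hchain n m hle
        have h2 : h (q n) ≤ h (q N) := hanti hn
        have h3 : L ≤ h (q m) := hLle m
        rw [dist_comm]
        rw [le_div_iff₀ hκ]; nlinarith
      · have := hchain m n hle
        have h2 : h (q m) ≤ h (q N) := hanti hm
        have h3 : L ≤ h (q n) := hLle n
        rw [le_div_iff₀ hκ]; nlinarith
    · have : Tendsto (fun n => (h (q n) - L) / κ) atTop (𝓝 ((L - L) / κ)) :=
        ((hLtend.sub_const L).div_const κ)
      simpa using this
  obtain ⟨p, hp⟩ := cauchySeq_tendsto_of_complete hcauchy
  have hps : p ∈ s := hs.mem_of_tendsto hp (Eventually.of_forall hmem)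
  have hpL : h p ≤ L := by
    by_contra hcon
    push_neg at hcon
    have hev1 := hlsc p hps ((L + h p) / 2) (by linarith)
    have htend : Tendsto q atTop (𝓝[s] p) :=
      tendsto_nhdsWithin_iff.mpr ⟨hp, Eventually.of_forall hmem⟩
    have hev2 := htend.eventually hev1
    have hev3 : ∀ᶠ n in atTop, h (q n) < (L + h p) / 2 :=
      hLtend.eventually_lt_const (by linarith)
    obtain ⟨n, h1, h2⟩ := (hev2.and hev3).exists
    linarith
  have ha : ∀ n, h p + κ * dist p (q n) ≤ h (q n) := by
    intro n
    have hdtend : Tendsto (fun m => dist (q m) (q n)) atTop (𝓝 (dist p (q n))) :=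
      hp.dist tendsto_const_nhds
    have hdb : dist p (q n) ≤ (h (q n) - L) / κ := by
      refine le_of_tendsto hdtend ?_
      filter_upwards [eventually_ge_atTop n] with m hm
      have := hchain n m hm
      have := hLle m
      rw [le_div_iff₀ hκ]; nlinarith
    have : κ * dist p (q n) ≤ h (q n) - L := by
      rw [le_div_iff₀ hκ] at hdb; linarith
    linarith
  refine ⟨p, hps, ?_, ?_, ?_⟩
  · calc h p ≤ L := hpL
    _ ≤ h (q 0) := hLle 0
  · have := ha 0
    rw [hq0] at this
    have h0p : 0 ≤ h p := h0 p hps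
    rw [le_div_iff₀ hκ]; nlinarith
  · intro y hy
    by_contra hcon
    push_neg at hcon
    have hyS : ∀ n, y ∈ {w | w ∈ s ∧ h w + κ * dist w (q n) ≤ h (q n)} := by
      intro n
      refine ⟨hy, ?_⟩
      have htri : dist y (q n) ≤ dist y p + dist p (q n) := dist_triangle _ _ _
      have := ha n
      nlinarith
    have hiy : ∀ n, h (q (n + 1)) ≤ (h (q n) + h y) / 2 := by
      intro n
      have hbdd' : BddBelow (h '' {w | w ∈ s ∧ h w + κ * dist w (q n) ≤ h (q n)}) := by
        refine ⟨0, ?_⟩; rintro v ⟨w, hw, rfl⟩; exact h0 w hw.1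
      have := csInf_le hbdd' ⟨y, hyS n, rfl⟩
      have h2 := hinf n
      linarith
    have hLy : L ≤ (L + h y) / 2 := by
      have h1 : Tendsto (fun n => h (q (n + 1))) atTop (𝓝 L) :=
        hLtend.comp (tendsto_add_atTop_nat 1)
      exact le_of_tendsto_of_tendsto h1
        (by exact (hLtend.add_const (h y)).div_const 2) (Eventually.of_forall hiy)
    have hd : 0 ≤ κ * dist y p := by positivity
    linarith [hpL]

lemma nhdsGT_le_ne : (𝓝[>] (0:ℝ)) ≤ 𝓝[≠] (0:ℝ) :=
  nhdsWithin_mono 0 (fun t ht => ne_of_gt ht)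

lemma gateaux_subdiff {f : H → ℝ} {g : H → H} {dom : Set H}
    (hconv : ConvexOn ℝ dom f) {x : H} (hx : x ∈ interior dom)
    (hdiff : GateauxAt f (g x) x) : g x ∈ subdiff f dom x := by
  have hxd : x ∈ dom := interior_subset hx
  refine ⟨hxd, fun y hy => ?_⟩
  have key : Tendsto (fun t : ℝ => (f (x + t • (y - x)) - f x) / t) (𝓝[>] 0)
      (𝓝 ⟪g x, y - x⟫) := (hdiff (y - x)).mono_left nhdsGT_le_ne
  have hev : ∀ᶠ t in 𝓝[>] (0:ℝ), (f (x + t • (y - x)) - f x) / t ≤ f y - f x := by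
    filter_upwards [Ioc_mem_nhdsGT (zero_lt_one)] with t ht
    have hcomb := hconv.2 hxd hy (by linarith [ht.2] : (0:ℝ) ≤ 1 - t) ht.1.le (by ring)
    have heq : x + t • (y - x) = (1 - t) • x + t • y := by module
    rw [heq, div_le_iff₀ ht.1]
    simp only [smul_eq_mul] at hcomb
    nlinarith [hcomb]
  have := le_of_tendsto key hev
  linarith

lemma lsc_add_cont {f φ : H → ℝ} {s : Set H} (hf : LowerSemicontinuousOn f s)
    (hφ : Continuous φ) : LowerSemicontinuousOn (fun y => f y + φ y) s := by
  intro x hx b hb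
  have hb' : b < f x + φ x := hb
  have hε : 0 < (f x + φ x - b) / 2 := by linarith
  have h1 := hf x hx (f x - (f x + φ x - b) / 2) (by linarith)
  have h2 : ∀ᶠ y in 𝓝[s] x, φ x - (f x + φ x - b) / 2 < φ y :=
    ((hφ.tendsto x).eventually (eventually_gt_nhds (by linarith))).filter_mono
      nhdsWithin_le_nhds
  filter_upwards [h1, h2] with y hy1 hy2
  show b < f y + φ y
  linarith

theorem stmt3 (f : H → ℝ) (g : H → H) (dom : Set H) (C : Set H)
    (hdomConv : Convex ℝ dom) (hconv : ConvexOn ℝ dom f)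
    (hlsc : LowerSemicontinuousOn f dom) (hproper : dom.Nonempty)
    (hint : (interior dom).Nonempty)
    (hdiff : ∀ x ∈ interior dom, GateauxAt f (g x) x)
    (hesc : EssStrictConvex f dom)
    (hC : IsClosed C) (hCconv : Convex ℝ C) (hCne : (C ∩ interior dom).Nonempty)
    (x : ℕ → H) (hmono : FwdBregmanMono f g dom C x) :
    Bornology.IsBounded (Set.range x) := by
  obtain ⟨c, hcC, hcI⟩ := hCne
  have hcd : c ∈ dom := interior_subset hcI
  have hsubc : g c ∈ subdiff f dom c := gateaux_subdiff hconv hcI (hdiff c hcI)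
  obtain ⟨δ, hδ, hSbdd⟩ := hesc.1 (g c) ⟨c, hsubc⟩
  obtain ⟨R₀, hR₀⟩ := hSbdd.subset_closedBall 0
  obtain ⟨R, hR⟩ : ∃ R : ℝ, R = max R₀ 0 := ⟨_, rfl⟩
  have hRS : {x : H | ∃ v ∈ Metric.closedBall (g c) δ, v ∈ subdiff f dom x} ⊆
      Metric.closedBall 0 R :=
    hR₀.trans (Metric.closedBall_subset_closedBall (hR ▸ le_max_left _ _))
  have hR0 : 0 ≤ R := hR ▸ le_max_right _ _
  obtain ⟨ρ, hρ, hball⟩ := Metric.mem_nhds_iff.mp (mem_interior_iff_mem_nhds.mp hcI)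
  obtain ⟨h, hh⟩ : ∃ h : H → ℝ, h = fun y => f y - f c - ⟪g c, y - c⟫ := ⟨_, rfl⟩
  have hlsch : LowerSemicontinuousOn h dom := by
    have hφ : Continuous (fun y : H => -(f c) - ⟪g c, y - c⟫) := by
      apply Continuous.sub continuous_const
      exact Continuous.inner continuous_const (continuous_id.sub continuous_const)
    have := lsc_add_cont hlsc hφ
    have heq : (fun y => f y + (-(f c) - ⟪g c, y - c⟫)) =
        fun y => f y - f c - ⟪g c, y - c⟫ := by funext y; ring
    rw [heq] at this
    rw [hh]; exact this
  have h0 : ∀ y ∈ dom, 0 ≤ h y := by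
    intro y hy
    have := hsubc.2 y hy
    rw [hh]; simp only
    linarith
  have hconvh : ∀ w ∈ dom, ∀ t : ℝ, 0 ≤ t → t ≤ 1 →
      h ((1 - t) • c + t • w) ≤ t * h w := by
    intro w hw t ht0 ht1
    have hfd := hconv.2 hcd hw (by linarith : (0:ℝ) ≤ 1 - t) ht0 (by ring)
    simp only [smul_eq_mul] at hfd
    have hin : ⟪g c, ((1 - t) • c + t • w) - c⟫ = t * ⟪g c, w - c⟫ := by
      have heq : ((1 - t) • c + t • w) - c = t • (w - c) := by module
      rw [heq, real_inner_smul_right]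
    rw [hh]; simp only
    rw [hin]
    nlinarith
  obtain ⟨r, hr⟩ : ∃ r : ℝ, r = 2 * (R + ‖c‖ + ρ) + 2 := ⟨_, rfl⟩
  have hrpos : 0 < r := by rw [hr]; positivity
  obtain ⟨ε, hε⟩ : ∃ ε : ℝ, ε = δ * ρ / 16 := ⟨_, rfl⟩
  have hεpos : 0 < ε := by rw [hε]; positivity
  -- key sphere lemma
  have sphere : ∀ w ∈ dom, ‖w - c‖ = r → ε ≤ h w := by
    intro w hw hwr
    by_contra hcon
    push_neg at hcon
    obtain ⟨z, hz⟩ : ∃ z : H, z = (1 - (1/2:ℝ)) • c + (1/2:ℝ) • w := ⟨_, rfl⟩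
    have hzc : ‖z - c‖ = r / 2 := by
      have heq : z - c = (1/2 : ℝ) • (w - c) := by rw [hz]; module
      rw [heq, norm_smul, hwr]
      simp
      ring
    have hzdom : Metric.closedBall z (ρ/4) ⊆ dom := by
      intro y hy
      have hyz : ‖y - z‖ ≤ ρ/4 := by
        rw [← dist_eq_norm]; exact Metric.mem_closedBall.mp hy
      have h1 : c + (2:ℝ) • (y - z) ∈ Metric.ball c ρ := by
        rw [Metric.mem_ball, dist_eq_norm]
        have heq2 : c + (2:ℝ) • (y - z) - c = (2:ℝ) • (y - z) := by module
        rw [heq2, norm_smul]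
        have : ‖(2:ℝ)‖ = 2 := by norm_num
        rw [this]
        nlinarith
      have h2 : c + (2:ℝ) • (y - z) ∈ dom := hball h1
      have heq : y = (1/2 : ℝ) • (c + (2:ℝ) • (y - z)) + (1/2 : ℝ) • w := by
        rw [hz]; module
      rw [heq]
      exact hdomConv h2 hw (by norm_num) (by norm_num) (by norm_num)
    have hzd : h z ≤ ε / 2 := by
      have h1 := hconvh w hw (1/2) (by norm_num) (by norm_num)
      rw [← hz] at h1
      linarith
    have hzmem : z ∈ Metric.closedBall z (ρ/4) := Metric.mem_closedBall_self (by positivity)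
    obtain ⟨p, hps, hphz, hpz, hpmin⟩ :=
      ekeland_aux Metric.isClosed_closedBall h (hlsch.mono hzdom)
        (fun y hy => h0 y (hzdom hy)) hzmem (half_pos hδ) hzd
    have hpz' : dist p z ≤ ρ / 16 := by
      refine hpz.trans ?_
      rw [hε]
      rw [div_le_div_iff₀ (half_pos hδ) (by norm_num : (0:ℝ) < 16)]
      nlinarith
    have hpint : p ∈ interior dom := by
      rw [mem_interior]
      refine ⟨Metric.ball p (ρ/8), ?_, Metric.isOpen_ball, Metric.mem_ball_self (by positivity)⟩
      intro y hy
      apply hzdom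
      rw [Metric.mem_closedBall]
      have h1 : dist y p < ρ/8 := Metric.mem_ball.mp hy
      calc dist y z ≤ dist y p + dist p z := dist_triangle _ _ _
        _ ≤ ρ/8 + ρ/16 := by linarith
        _ ≤ ρ/4 := by linarith
    -- gradient bound at p
    have hvle : ‖g p - g c‖ ≤ δ / 2 := by
      rcases eq_or_ne (g p - g c) 0 with hv0 | hv0
      · rw [hv0, norm_zero]; positivity
      · obtain ⟨d, hd⟩ : ∃ d : H, d = g c - g p := ⟨_, rfl⟩
        have hdne : d ≠ 0 := by
          rw [hd]
          intro hc
          apply hv0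
          rw [← neg_sub]
          rw [hc, neg_zero]
        have hdpos : 0 < ‖d‖ := norm_pos_iff.mpr hdne
        have hTend : Tendsto (fun t : ℝ => (f (p + t • d) - f p) / t - ⟪g c, d⟫)
            (𝓝[>] 0) (𝓝 (⟪g p, d⟫ - ⟪g c, d⟫)) :=
          (((hdiff p hpint) d).mono_left nhdsGT_le_ne).sub_const _
        have hEv : ∀ᶠ t in 𝓝[>] (0:ℝ),
            -(δ/2) * ‖d‖ ≤ (f (p + t • d) - f p) / t - ⟪g c, d⟫ := by
          filter_upwards [Ioc_mem_nhdsGT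
            (show (0:ℝ) < ρ / (8 * ‖d‖) by positivity)] with t ht
          have ht0 : 0 < t := ht.1
          have htd : t * ‖d‖ ≤ ρ / 8 := by
            rw [← le_div_iff₀ hdpos]
            calc t ≤ ρ / (8 * ‖d‖) := ht.2
              _ = ρ / 8 / ‖d‖ := by ring
          have hdist : dist (p + t • d) p = t * ‖d‖ := by
            rw [dist_eq_norm]
            have heq3 : p + t • d - p = t • d := by abel
            rw [heq3, norm_smul, Real.norm_eq_abs, abs_of_pos ht0]
          have hmem : p + t • d ∈ Metric.closedBall z (ρ/4) := by
            rw [Metric.mem_closedBall]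
            calc dist (p + t • d) z ≤ dist (p + t • d) p + dist p z := dist_triangle _ _ _
              _ ≤ ρ/8 + ρ/16 := by rw [hdist]; linarith
              _ ≤ ρ/4 := by linarith
          have hek := hpmin _ hmem
          rw [hdist] at hek
          have hexp : h (p + t • d) - h p = f (p + t • d) - f p - t * ⟪g c, d⟫ := by
            rw [hh]; simp only
            have heq4 : p + t • d - c = (p - c) + t • d := by abel
            rw [heq4, inner_add_right, real_inner_smul_right]
            ring
          have key : -(δ/2) * (t * ‖d‖) ≤ f (p + t • d) - f p - t * ⟪g c, d⟫ := by
            rw [← hexp]; linarith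
          have hfrac : (f (p + t • d) - f p) / t - ⟪g c, d⟫
              = (f (p + t • d) - f p - t * ⟪g c, d⟫) / t := by
            field_simp
          rw [hfrac, le_div_iff₀ ht0]
          nlinarith
        have hfin : -(δ/2) * ‖d‖ ≤ ⟪g p, d⟫ - ⟪g c, d⟫ := ge_of_tendsto hTend hEv
        have hinner : ⟪g p, d⟫ - ⟪g c, d⟫ = -(‖g p - g c‖^2) := by
          rw [← inner_sub_left]
          have heq5 : d = -(g p - g c) := by rw [hd]; abel
          rw [heq5, inner_neg_right, real_inner_self_eq_norm_sq]
        have hnd : ‖d‖ = ‖g p - g c‖ := by rw [hd, norm_sub_rev]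
        rw [hinner, hnd] at hfin
        have hvpos : 0 < ‖g p - g c‖ := norm_pos_iff.mpr hv0
        nlinarith
    have hpS : p ∈ Metric.closedBall (0:H) R := by
      apply hRS
      refine ⟨g p, ?_, gateaux_subdiff hconv hpint (hdiff p hpint)⟩
      rw [Metric.mem_closedBall, dist_eq_norm]
      linarith
    have hpR : ‖p‖ ≤ R := by
      rw [Metric.mem_closedBall, dist_zero_right] at hpS; exact hpS
    have h1 : r / 2 ≤ ‖z‖ + ‖c‖ := by
      have := norm_sub_le z c
      rw [hzc] at this
      linarith
    have h2 : ‖z‖ ≤ ‖p‖ + ρ/16 := by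
      have h3 : ‖z‖ - ‖p‖ ≤ ‖z - p‖ := norm_sub_norm_le z p
      have hzp : ‖z - p‖ ≤ ρ/16 := by rw [← dist_eq_norm, dist_comm]; exact hpz'
      linarith
    rw [hr] at h1
    linarith
  -- transfer: coercivity bound on the sequence
  have hxd : ∀ k, x k ∈ dom := fun k => interior_subset (hmono.2.1 k)
  have hbreg : ∀ y, bregD f g y c = h y := by intro y; rw [hh, bregD]
  have hmon : ∀ k, h (x k) ≤ h (x 0) := by
    intro k
    induction k with
    | zero => exact le_refl _
    | succ n ih =>
      have := hmono.2.2 c ⟨hcC, hcI⟩ n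
      rw [hbreg, hbreg] at this
      linarith
  obtain ⟨B, hB⟩ : ∃ B : ℝ, B = max r (h (x 0) * r / ε) := ⟨_, rfl⟩
  have hbnd : ∀ k, ‖x k - c‖ ≤ B := by
    intro k
    by_cases hcase : ‖x k - c‖ ≤ r
    · exact hcase.trans (hB ▸ le_max_left _ _)
    · push_neg at hcase
      have hLpos : 0 < ‖x k - c‖ := by linarith
      have ht0 : 0 < r / ‖x k - c‖ := by positivity
      have ht1 : r / ‖x k - c‖ ≤ 1 := by
        rw [div_le_one hLpos]; linarith
      have hwdom : (1 - r / ‖x k - c‖) • c + (r / ‖x k - c‖) • (x k) ∈ dom :=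
        hdomConv hcd (hxd k) (by linarith) ht0.le (by ring)
      have hwc : ‖((1 - r / ‖x k - c‖) • c + (r / ‖x k - c‖) • (x k)) - c‖ = r := by
        have heq : ((1 - r / ‖x k - c‖) • c + (r / ‖x k - c‖) • (x k)) - c
            = (r / ‖x k - c‖) • (x k - c) := by module
        rw [heq, norm_smul, Real.norm_eq_abs, abs_of_pos ht0]
        field_simp
      have hsph := sphere _ hwdom hwc
      have hcvx := hconvh (x k) (hxd k) (r / ‖x k - c‖) ht0.le ht1
      have hεt : ε ≤ (r / ‖x k - c‖) * h (x k) := le_trans hsph hcvx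
      have hhk : 0 ≤ h (x k) := h0 _ (hxd k)
      have hkey : ‖x k - c‖ ≤ h (x k) * r / ε := by
        rw [le_div_iff₀ hεpos]
        rw [div_mul_eq_mul_div, le_div_iff₀ hLpos] at hεt
        nlinarith
      calc ‖x k - c‖ ≤ h (x k) * r / ε := hkey
        _ ≤ h (x 0) * r / ε := by
            apply div_le_div_of_nonneg_right ?_ hεpos.le
            exact mul_le_mul_of_nonneg_right (hmon k) hrpos.le
        _ ≤ B := hB ▸ le_max_right _ _
  apply Bornology.IsBounded.subset (Metric.isBounded_closedBall (x := c) (r := B))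
  rintro _ ⟨k, rfl⟩
  rw [Metric.mem_closedBall, dist_eq_norm]
  exact hbnd k
end

section
/- Let f ∈ Γ₀(H) with int dom f ≠ ∅, Gâteaux differentiable on int dom f and essentially strictly convex. Let C ⊆ H be closed convex with C ∩ int dom f ≠ ∅ and let (x_k) in int dom f be forward Bregman monotone with respect to C. Then (x_k) converges weakly to a point in C ∩ int dom f if and only if all weak sequential cluster points of (x_k) lie in C ∩ int dom f. -/
open Filter Topology
open scoped RealInnerProductSpace

variable {H : Type*} [NormedAddCommGroup H] [InnerProductSpace ℝ H] [CompleteSpace H]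

/-!
Forward Bregman monotonicity makes `k ↦ D_f(x_k, c)` nonincreasing and nonnegative for every
`c ∈ C ∩ int dom f`, so it converges. For `p, q ∈ C ∩ int dom f` the difference
`D_f(x_k, q) - D_f(x_k, p)` is `⟪x_k, ∇f p - ∇f q⟫` plus a constant, hence converges too; if `p`
and `q` are both weak sequential cluster points this forces `⟪p - q, ∇f p - ∇f q⟫ = 0`, which
strict convexity of `f` on the segment `[p, q]` rules out unless `p = q`.

The sequence is bounded: `(∂f)⁻¹` is bounded on a ball around `∇f c`, and Ekeland's principle
(in Brøndsted–Rockafellar form) places a point of that bounded set near `(1 - t) c + t w` whenever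
`D_f(w, c) ≤ M`, for a fixed small `t`. So the sequence has weak cluster points; if they all lie in
`C ∩ int dom f` they coincide, and then the whole sequence converges weakly to that point.
-/

theorem Convex.closedBall_combo_subset {F : Type*} [NormedAddCommGroup F] [NormedSpace ℝ F]
    {s : Set F} (hs : Convex ℝ s) {c w : F} {r t : ℝ} (hc : Metric.closedBall c r ⊆ s)
    (hw : w ∈ s) (ht₀ : 0 ≤ t) (ht₁ : t < 1) :
    Metric.closedBall ((1 - t) • c + t • w) ((1 - t) * r) ⊆ s := by
  intro y hy
  have ha : 0 < 1 - t := sub_pos.2 ht₁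
  set c' := c + (1 - t)⁻¹ • (y - ((1 - t) • c + t • w))
  have hc' : c' ∈ Metric.closedBall c r := by
    rw [Metric.mem_closedBall, dist_eq_norm, add_sub_cancel_left, norm_smul,
      Real.norm_of_nonneg (inv_nonneg.2 ha.le), inv_mul_le_iff₀ ha, ← dist_eq_norm]
    exact hy
  have hy' : y = (1 - t) • c' + t • w := by
    rw [smul_add, smul_smul, mul_inv_cancel₀ ha.ne', one_smul]
    abel
  rw [hy']
  exact hs (hc hc') hw ha.le ht₀ (sub_add_cancel 1 t)

section Ekeland

variable {α : Type*} [MetricSpace α] {h : α → ℝ} {ε : ℝ}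

def ekelandSet (h : α → ℝ) (ε : ℝ) (w : α) : Set α :=
  {y | h y + ε * dist y w ≤ h w}

theorem mem_ekelandSet {w y : α} : y ∈ ekelandSet h ε w ↔ h y + ε * dist y w ≤ h w :=
  Iff.rfl

theorem self_mem_ekelandSet (w : α) : w ∈ ekelandSet h ε w := by
  simp [mem_ekelandSet]

theorem ekelandSet_subset_of_mem (hε : 0 ≤ ε) {w y : α} (hy : y ∈ ekelandSet h ε w) :
    ekelandSet h ε y ⊆ ekelandSet h ε w := fun x hx => by
  rw [mem_ekelandSet] at *
  nlinarith [dist_triangle x y w]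

theorem LowerSemicontinuous.isClosed_ekelandSet (hh : LowerSemicontinuous h) (w : α) :
    IsClosed (ekelandSet h ε w) :=
  (hh.add (continuous_const.mul (continuous_id.dist continuous_const)).lowerSemicontinuous
    ).isClosed_preimage (h w)

theorem exists_mem_ekelandSet_le_add (hb : BddBelow (Set.range h)) (w : α) {η : ℝ} (hη : 0 < η) :
    ∃ y ∈ ekelandSet h ε w, ∀ x ∈ ekelandSet h ε w, h y ≤ h x + η := by
  have hbdd : BddBelow (h '' ekelandSet h ε w) := hb.mono (Set.image_subset_range _ _)
  obtain ⟨_, ⟨y, hy, rfl⟩, hlt⟩ :=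
    Real.lt_sInf_add_pos (Set.Nonempty.image h ⟨w, self_mem_ekelandSet w⟩) hη
  exact ⟨y, hy, fun x hx => by linarith [csInf_le hbdd ⟨x, hx, rfl⟩]⟩

theorem exists_mem_ekelandSet_subset_singleton [CompleteSpace α] (hh : LowerSemicontinuous h)
    (hb : BddBelow (Set.range h)) (hε : 0 < ε) (m : α) :
    ∃ p ∈ ekelandSet h ε m, ekelandSet h ε p ⊆ {p} := by
  have hη (n : ℕ) : (0 : ℝ) < (1 / 2) ^ n := by positivity
  choose next hnext_mem hnext_le using fun n w => exists_mem_ekelandSet_le_add hb w (hη n)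
  -- `z (n + 1)` minimises `h` up to `2⁻ⁿ` on the Ekeland set of `z n`: these closed sets are
  -- nested and their diameters tend to `0`.
  let z : ℕ → α := fun n => Nat.rec m next n
  have hS_anti : Antitone fun n => ekelandSet h ε (z n) :=
    antitone_nat_of_succ_le fun n => ekelandSet_subset_of_mem hε.le (hnext_mem n (z n))
  have hS_small (n : ℕ) {y : α} (hy : y ∈ ekelandSet h ε (z (n + 1))) :
      dist y (z (n + 1)) ≤ (1 / 2) ^ n / ε := by
    have h1 := mem_ekelandSet.1 hy
    have h2 := hnext_le n (z n) y (hS_anti (Nat.le_succ n) hy)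
    rw [le_div_iff₀ hε]
    linarith
  have hη_lim : Tendsto (fun n : ℕ => (1 / 2 : ℝ) ^ n / ε) atTop (𝓝 0) := by
    simpa using (tendsto_pow_atTop_nhds_zero_of_lt_one (by norm_num)
      (by norm_num : (1 / 2 : ℝ) < 1)).div_const ε
  have hcauchy : CauchySeq fun n => z (n + 1) := by
    refine cauchySeq_of_le_tendsto_0 (fun N => 2 * ((1 / 2) ^ N / ε)) (fun k l N hk hl => ?_)
      (by simpa using hη_lim.const_mul 2)
    have hk' := hS_small N (hS_anti (Nat.succ_le_succ hk) (self_mem_ekelandSet _))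
    have hl' := hS_small N (hS_anti (Nat.succ_le_succ hl) (self_mem_ekelandSet _))
    linarith [dist_triangle_right (z (k + 1)) (z (l + 1)) (z (N + 1))]
  obtain ⟨p, hp⟩ := cauchySeq_tendsto_of_complete hcauchy
  have hp_mem (n : ℕ) : p ∈ ekelandSet h ε (z n) :=
    (hh.isClosed_ekelandSet _).mem_of_tendsto hp (Filter.eventually_atTop.2
      ⟨n, fun k hk => hS_anti (Nat.le_succ_of_le hk) (self_mem_ekelandSet _)⟩)
  refine ⟨p, hp_mem 0, fun y hy => ?_⟩
  have hy_lim : Tendsto (fun n => z (n + 1)) atTop (𝓝 y) :=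
    tendsto_iff_dist_tendsto_zero.2 <| squeeze_zero (fun _ => dist_nonneg) (fun n =>
      (dist_comm _ y).le.trans <|
        hS_small n (ekelandSet_subset_of_mem hε.le (hp_mem (n + 1)) hy)) hη_lim
  exact tendsto_nhds_unique hy_lim hp

/-- **Ekeland's variational principle**. -/
theorem exists_dist_le_forall_le_add_mul_dist [CompleteSpace α] (hh : LowerSemicontinuous h)
    {b lam : ℝ} (hb : ∀ y, b ≤ h y) (hε : 0 < ε) {m : α} (hm : h m ≤ b + ε * lam) :
    ∃ z, dist z m ≤ lam ∧ ∀ y, h z ≤ h y + ε * dist y z := by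
  obtain ⟨z, hzm, hz⟩ :=
    exists_mem_ekelandSet_subset_singleton hh ⟨b, Set.forall_mem_range.2 hb⟩ hε m
  refine ⟨z, ?_, fun y => ?_⟩
  · nlinarith [mem_ekelandSet.1 hzm, hb z]
  · by_contra! hlt
    have : y = z := hz (mem_ekelandSet.2 hlt.le)
    subst this
    simp at hlt

end Ekeland

section InnerProductSpace

variable {E : Type*} [NormedAddCommGroup E] [InnerProductSpace ℝ E]

theorem GateauxAt.mem_subdiff {f : E → ℝ} {dom : Set E} {u z : E} (hf : GateauxAt f u z)
    (hconv : ConvexOn ℝ dom f) (hz : z ∈ dom) : u ∈ subdiff f dom z := by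
  refine ⟨hz, fun y hy => ?_⟩
  have hquot : ∀ᶠ t in 𝓝[>] (0 : ℝ), (f (z + t • (y - z)) - f z) / t ≤ f y - f z := by
    filter_upwards [Ioc_mem_nhdsGT (zero_lt_one' ℝ)] with t ⟨ht₀, ht₁⟩
    have hcomb : z + t • (y - z) = (1 - t) • z + t • y := by module
    rw [div_le_iff₀ ht₀, hcomb]
    have := hconv.2 hz hy (sub_nonneg.2 ht₁) ht₀.le (sub_add_cancel 1 t)
    rw [smul_eq_mul, smul_eq_mul] at this
    linarith
  have := le_of_tendsto ((hf (y - z)).mono_left (nhdsGT_le_nhdsNE 0)) hquot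
  linarith

theorem GateauxAt.sub_inner {f : E → ℝ} {u z : E} (hf : GateauxAt f u z) (a : E) :
    GateauxAt (fun y => f y - ⟪a, y⟫) (u - a) z := by
  intro v
  rw [inner_sub_left]
  refine ((hf v).sub_const ⟪a, v⟫).congr' ?_
  filter_upwards [self_mem_nhdsWithin] with t (ht : t ≠ 0)
  rw [inner_add_right, inner_smul_right]
  field_simp
  ring

theorem GateauxAt.norm_le_of_eventually_le {f : E → ℝ} {u z : E} {δ : ℝ} (hf : GateauxAt f u z)
    (hδ : 0 ≤ δ) (hmin : ∀ᶠ y in 𝓝 z, f z ≤ f y + δ * ‖y - z‖) : ‖u‖ ≤ δ := by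
  have hdir (v : E) : -(δ * ‖v‖) ≤ ⟪u, v⟫ := by
    have hline : Tendsto (fun t : ℝ => z + t • v) (𝓝[>] 0) (𝓝 z) := by
      refine tendsto_nhdsWithin_of_tendsto_nhds ?_
      exact (by fun_prop : Continuous fun t : ℝ => z + t • v).tendsto' 0 z (by simp)
    refine ge_of_tendsto ((hf v).mono_left (nhdsGT_le_nhdsNE 0)) ?_
    filter_upwards [hline.eventually hmin, self_mem_nhdsWithin] with t ht (ht₀ : 0 < t)
    rw [add_sub_cancel_left, norm_smul, Real.norm_of_nonneg ht₀.le] at ht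
    rw [le_div_iff₀ ht₀]
    linarith
  have h := hdir (-u)
  rw [norm_neg, inner_neg_right, real_inner_self_eq_norm_sq] at h
  nlinarith [norm_nonneg u]

theorem StrictConvexOn.inner_sub_pos {s : Set E} {f : E → ℝ} (hf : StrictConvexOn ℝ s f)
    {p q u v : E} (hp : p ∈ s) (hq : q ∈ s) (hpq : p ≠ q)
    (hu : ∀ y ∈ s, f p + ⟪u, y - p⟫ ≤ f y) (hv : ∀ y ∈ s, f q + ⟪v, y - q⟫ ≤ f y) :
    0 < ⟪p - q, u - v⟫ := by
  set m : E := (1 / 2 : ℝ) • p + (1 / 2 : ℝ) • q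
  have hm : m ∈ s := hf.1 hp hq (by norm_num) (by norm_num) (by norm_num)
  have hmid := hf.2 hp hq hpq (by norm_num : (0 : ℝ) < 1 / 2) (by norm_num : (0 : ℝ) < 1 / 2)
    (by norm_num)
  rw [smul_eq_mul, smul_eq_mul] at hmid
  have hup := hu m hm
  have hvq := hv m hm
  rw [show m - p = (1 / 2 : ℝ) • (q - p) by module, inner_smul_right] at hup
  rw [show m - q = (1 / 2 : ℝ) • (p - q) by module, inner_smul_right] at hvq
  have e : ⟪p - q, u - v⟫ = -⟪u, q - p⟫ - ⟪v, p - q⟫ := by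
    rw [← inner_neg_right, neg_sub, real_inner_comm, inner_sub_left]
  linarith

end InnerProductSpace

/-- A Brøndsted–Rockafellar estimate, from Ekeland's principle on `closedBall m ρ`. -/
theorem exists_norm_sub_le_and_norm_grad_sub_le {f : H → ℝ} {g : H → H} {dom : Set H}
    (hlsc : LowerSemicontinuousOn f dom) (hdiff : ∀ x ∈ interior dom, GateauxAt f (g x) x)
    {m u : H} {a ρ δ : ℝ} (hρ : 0 < ρ) (hδ : 0 < δ) (hball : Metric.closedBall m ρ ⊆ dom)
    (ha : ∀ y ∈ dom, a ≤ f y - ⟪u, y⟫) (hm : f m - ⟪u, m⟫ ≤ a + δ * (ρ / 2)) :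
    ∃ z ∈ interior dom, ‖z - m‖ ≤ ρ / 2 ∧ ‖g z - u‖ ≤ δ := by
  have : CompleteSpace (Metric.closedBall m ρ) := Metric.isClosed_closedBall.completeSpace_coe
  have hφ : LowerSemicontinuous fun y : Metric.closedBall m ρ => f y - ⟪u, y⟫ :=
    (lowerSemicontinuous_restrict_iff.2 (hlsc.mono hball)).add
      (continuous_const.inner continuous_subtype_val).neg.lowerSemicontinuous
  obtain ⟨z, hzm, hz⟩ := exists_dist_le_forall_le_add_mul_dist hφ
    (fun y => ha y (hball y.2)) hδ (m := ⟨m, Metric.mem_closedBall_self hρ.le⟩) hm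
  have hz_ball : (z : H) ∈ Metric.ball m ρ := hzm.trans_lt (half_lt_self hρ)
  have hz_int : (z : H) ∈ interior dom :=
    interior_mono hball (Metric.ball_subset_interior_closedBall hz_ball)
  refine ⟨z, hz_int, by simpa [Subtype.dist_eq, dist_eq_norm] using hzm, ?_⟩
  refine ((hdiff z hz_int).sub_inner u).norm_le_of_eventually_le hδ.le ?_
  filter_upwards [Metric.isOpen_ball.mem_nhds hz_ball] with y hy
  simpa [Subtype.dist_eq, dist_eq_norm] using hz ⟨y, Metric.ball_subset_closedBall hy⟩

theorem exists_near_combo_mem_subdiff {f : H → ℝ} {g : H → H} {dom : Set H}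
    (hdomConv : Convex ℝ dom) (hconv : ConvexOn ℝ dom f) (hlsc : LowerSemicontinuousOn f dom)
    (hdiff : ∀ x ∈ interior dom, GateauxAt f (g x) x) {c w : H} {r t δ : ℝ} (hr : 0 < r)
    (hδ : 0 < δ) (hcr : Metric.closedBall c r ⊆ dom) (hw : w ∈ dom) (ht₀ : 0 < t)
    (ht₁ : t ≤ 1 / 2) (htw : t * bregD f g w c ≤ δ * r / 4) :
    ∃ z ∈ {x | ∃ v ∈ Metric.closedBall (g c) δ, v ∈ subdiff f dom x},
      ‖z - ((1 - t) • c + t • w)‖ ≤ r / 2 := by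
  have hc : c ∈ interior dom :=
    interior_mono hcr (Metric.ball_subset_interior_closedBall (Metric.mem_ball_self hr))
  have hcdom : c ∈ dom := interior_subset hc
  have ha (y : H) (hy : y ∈ dom) : f c - ⟪g c, c⟫ ≤ f y - ⟪g c, y⟫ := by
    have := ((hdiff c hc).mem_subdiff hconv hcdom).2 y hy
    rw [inner_sub_right] at this
    linarith
  -- `c` minimises `f - ⟪g c, ·⟫` on `dom`; by convexity the excess at `(1 - t) • c + t • w` is
  -- at most `t * bregD f g w c`.
  have hm : f ((1 - t) • c + t • w) - ⟪g c, (1 - t) • c + t • w⟫ ≤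
      f c - ⟪g c, c⟫ + δ * ((1 - t) * r / 2) := by
    have hf := hconv.2 hcdom hw (by linarith) ht₀.le (sub_add_cancel 1 t)
    rw [smul_eq_mul, smul_eq_mul] at hf
    rw [inner_add_right, inner_smul_right, inner_smul_right]
    rw [bregD, inner_sub_right] at htw
    nlinarith [mul_pos hδ hr]
  obtain ⟨z, hz, hzm, hgz⟩ := exists_norm_sub_le_and_norm_grad_sub_le hlsc hdiff
    (mul_pos (by linarith) hr) hδ (hdomConv.closedBall_combo_subset hcr hw ht₀.le (by linarith))
    ha hm
  refine ⟨z, ⟨g z, ?_, (hdiff z hz).mem_subdiff hconv (interior_subset hz)⟩, ?_⟩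
  · rwa [Metric.mem_closedBall, dist_eq_norm]
  · nlinarith

theorem EssStrictConvex.isBounded_bregD_le {f : H → ℝ} {g : H → H} {dom : Set H}
    (hesc : EssStrictConvex f dom) (hdomConv : Convex ℝ dom) (hconv : ConvexOn ℝ dom f)
    (hlsc : LowerSemicontinuousOn f dom) (hdiff : ∀ x ∈ interior dom, GateauxAt f (g x) x)
    {c : H} (hc : c ∈ interior dom) (M : ℝ) :
    Bornology.IsBounded {w | w ∈ dom ∧ bregD f g w c ≤ M} := by
  obtain ⟨δ, hδ, hS⟩ :=
    hesc.1 (g c) ⟨c, (hdiff c hc).mem_subdiff hconv (interior_subset hc)⟩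
  obtain ⟨R, hR⟩ := isBounded_iff_forall_norm_le.1 hS
  obtain ⟨r, hr, hcr⟩ := Metric.nhds_basis_closedBall.mem_iff.1 (mem_interior_iff_mem_nhds.1 hc)
  have hsmall : ∀ᶠ t in 𝓝[>] (0 : ℝ), t * M < δ * r / 4 :=
    tendsto_nhdsWithin_of_tendsto_nhds ((continuous_mul_const M).tendsto' 0 0 (zero_mul M))
      |>.eventually (gt_mem_nhds (by positivity))
  obtain ⟨t, ⟨ht₀, ht₁⟩, htM⟩ :=
    (Filter.Eventually.and (Ioc_mem_nhdsGT (by norm_num : (0 : ℝ) < 1 / 2)) hsmall).exists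
  refine isBounded_iff_forall_norm_le.2 ⟨t⁻¹ * (R + r / 2 + ‖c‖), fun w ⟨hw, hwM⟩ => ?_⟩
  obtain ⟨z, hzS, hzm⟩ := exists_near_combo_mem_subdiff hdomConv hconv hlsc hdiff hr hδ hcr hw
    ht₀ ht₁ ((mul_le_mul_of_nonneg_left hwM ht₀.le).trans htM.le)
  have hc' : ‖(1 - t) • c‖ ≤ ‖c‖ := by
    rw [norm_smul, Real.norm_of_nonneg (by linarith)]
    nlinarith [norm_nonneg c]
  rw [le_inv_mul_iff₀ ht₀]
  calc t * ‖w‖ = ‖z + ((1 - t) • c + t • w - z) - (1 - t) • c‖ := by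
        rw [add_sub_cancel, add_sub_cancel_left, norm_smul, Real.norm_of_nonneg ht₀.le]
    _ ≤ ‖z‖ + ‖(1 - t) • c + t • w - z‖ + ‖(1 - t) • c‖ :=
        (norm_sub_le _ _).trans (by gcongr; exact norm_add_le _ _)
    _ ≤ R + r / 2 + ‖c‖ := by
        gcongr
        · exact hR z hzS
        · rwa [norm_sub_rev]

section WeakLim

variable {E : Type*} [NormedAddCommGroup E] [InnerProductSpace ℝ E]

theorem WeakLim.comp {x : ℕ → E} {p : E} (hx : WeakLim x p) {φ : ℕ → ℕ} (hφ : StrictMono φ) :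
    WeakLim (x ∘ φ) p :=
  fun u => (hx u).comp hφ.tendsto_atTop

theorem WeakLim.unique {x : ℕ → E} {p q : E} (hp : WeakLim x p) (hq : WeakLim x q) : p = q :=
  ext_inner_right ℝ fun u => tendsto_nhds_unique (hp u) (hq u)

theorem weakLim_of_forall_subseq {x : ℕ → E} {p : E}
    (h : ∀ φ : ℕ → ℕ, StrictMono φ → ∃ ψ : ℕ → ℕ, StrictMono ψ ∧ WeakLim (x ∘ φ ∘ ψ) p) :
    WeakLim x p := fun u =>
  tendsto_of_subseq_tendsto fun ns hns => by
    obtain ⟨φ, -, hφ⟩ := strictMono_subseq_of_tendsto_atTop hns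
    obtain ⟨ψ, -, hψ⟩ := h _ hφ
    exact ⟨φ ∘ ψ, hψ u⟩

end WeakLim

/-- Sequential Banach–Alaoglu, applied in the separable closed span of the sequence. -/
theorem exists_strictMono_weakLim {y : ℕ → H} (hy : Bornology.IsBounded (Set.range y)) :
    ∃ (p : H) (φ : ℕ → ℕ), StrictMono φ ∧ WeakLim (y ∘ φ) p := by
  set K : Submodule ℝ H := (Submodule.span ℝ (Set.range y)).topologicalClosure
  have : CompleteSpace K := (Submodule.isClosed_topologicalClosure _).completeSpace_coe
  have : TopologicalSpace.SeparableSpace K := by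
    have hsep : TopologicalSpace.IsSeparable (K : Set H) := by
      rw [Submodule.topologicalClosure_coe]
      exact (Set.countable_range y).isSeparable.span.closure
    exact hsep.separableSpace
  have hyK (k : ℕ) : y k ∈ K :=
    Submodule.le_topologicalClosure _ (Submodule.subset_span ⟨k, rfl⟩)
  obtain ⟨B, hB⟩ := isBounded_iff_forall_norm_le.1 hy
  let ℓ : ℕ → WeakDual ℝ K := fun k =>
    StrongDual.toWeakDual (InnerProductSpace.toDual ℝ K ⟨y k, hyK k⟩)
  have hℓ (k : ℕ) : ℓ k ∈ WeakDual.toStrongDual ⁻¹' Metric.closedBall 0 B := by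
    have : ‖InnerProductSpace.toDual ℝ K ⟨y k, hyK k⟩‖ ≤ B := by simpa using hB _ ⟨k, rfl⟩
    exact (mem_closedBall_zero_iff (E := StrongDual ℝ K)).2 this
  obtain ⟨ψ, -, φ, hφ, hlim⟩ := WeakDual.isSeqCompact_closedBall ℝ K 0 B hℓ
  refine ⟨(InnerProductSpace.toDual ℝ K).symm (WeakDual.toStrongDual ψ), φ, hφ, fun u => ?_⟩
  have := ((WeakDual.eval_continuous (K.orthogonalProjectionOnto u)).tendsto ψ).comp hlim
  simp only [ℓ, Function.comp_def, StrongDual.toWeakDual_apply,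
    InnerProductSpace.toDual_apply_apply,
    Submodule.inner_orthogonalProjectionOnto_eq_of_mem_left] at this
  simpa [InnerProductSpace.toDual_symm_apply,
    ← Submodule.inner_orthogonalProjectionOnto_eq_of_mem_left] using this

section Bregman

variable {E : Type*} [NormedAddCommGroup E] [InnerProductSpace ℝ E]
  {f : E → ℝ} {g : E → E} {dom C : Set E} {x : ℕ → E}

theorem bregD_nonneg {w c : E} (hc : g c ∈ subdiff f dom c) (hw : w ∈ dom) :
    0 ≤ bregD f g w c := by
  have := hc.2 w hw
  rw [bregD]
  linarith

theorem bregD_sub_bregD (y p q : E) :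
    bregD f g y q - bregD f g y p = ⟪y, g p - g q⟫ + (f p - f q + ⟪g q, q⟫ - ⟪g p, p⟫) := by
  simp only [bregD, inner_sub_right, real_inner_comm y]
  ring

theorem EssStrictConvex.inner_sub_pos (hesc : EssStrictConvex f dom) (hdomConv : Convex ℝ dom)
    (hconv : ConvexOn ℝ dom f) (hdiff : ∀ x ∈ interior dom, GateauxAt f (g x) x) {p q : E}
    (hp : p ∈ interior dom) (hq : q ∈ interior dom) (hpq : p ≠ q) :
    0 < ⟪p - q, g p - g q⟫ := by
  have hseg : segment ℝ p q ⊆ interior dom := hdomConv.interior.segment_subset hp hq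
  have hsub (z : E) (hz : z ∈ interior dom) : g z ∈ subdiff f dom z :=
    (hdiff z hz).mem_subdiff hconv (interior_subset hz)
  exact (hesc.2 _ (fun z hz => ⟨g z, hsub z (hseg hz)⟩) (convex_segment p q)).inner_sub_pos
    (left_mem_segment ℝ p q) (right_mem_segment ℝ p q) hpq
    (fun y hy => (hsub p hp).2 y (interior_subset (hseg hy)))
    (fun y hy => (hsub q hq).2 y (interior_subset (hseg hy)))

namespace FwdBregmanMono

theorem antitone_bregD (hx : FwdBregmanMono f g dom C x) {c : E} (hc : c ∈ C ∩ interior dom) :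
    Antitone fun k => bregD f g (x k) c :=
  antitone_nat_of_succ_le (hx.2.2 c hc)

theorem exists_tendsto_bregD (hx : FwdBregmanMono f g dom C x) (hconv : ConvexOn ℝ dom f)
    (hdiff : ∀ x ∈ interior dom, GateauxAt f (g x) x) {c : E} (hc : c ∈ C ∩ interior dom) :
    ∃ L, Tendsto (fun k => bregD f g (x k) c) atTop (𝓝 L) :=
  ⟨_, tendsto_atTop_ciInf (hx.antitone_bregD hc) ⟨0, Set.forall_mem_range.2 fun k =>
    bregD_nonneg ((hdiff c hc.2).mem_subdiff hconv (interior_subset hc.2))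
      (interior_subset (hx.2.1 k))⟩⟩

theorem exists_tendsto_inner_sub (hx : FwdBregmanMono f g dom C x) (hconv : ConvexOn ℝ dom f)
    (hdiff : ∀ x ∈ interior dom, GateauxAt f (g x) x) {p q : E} (hp : p ∈ C ∩ interior dom)
    (hq : q ∈ C ∩ interior dom) :
    ∃ L, Tendsto (fun k => ⟪x k, g p - g q⟫) atTop (𝓝 L) := by
  obtain ⟨Lp, hLp⟩ := hx.exists_tendsto_bregD hconv hdiff hp
  obtain ⟨Lq, hLq⟩ := hx.exists_tendsto_bregD hconv hdiff hq
  refine ⟨Lq - Lp - (f p - f q + ⟪g q, q⟫ - ⟪g p, p⟫), ?_⟩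
  simpa only [bregD_sub_bregD, add_sub_cancel_right] using
    (hLq.sub hLp).sub_const (f p - f q + ⟪g q, q⟫ - ⟪g p, p⟫)

theorem eq_of_weakLim_comp (hx : FwdBregmanMono f g dom C x) (hesc : EssStrictConvex f dom)
    (hdomConv : Convex ℝ dom) (hconv : ConvexOn ℝ dom f)
    (hdiff : ∀ x ∈ interior dom, GateauxAt f (g x) x) {p q : E} (hp : p ∈ C ∩ interior dom)
    (hq : q ∈ C ∩ interior dom) {φ ψ : ℕ → ℕ} (hφ : StrictMono φ) (hψ : StrictMono ψ)
    (hxp : WeakLim (x ∘ φ) p) (hxq : WeakLim (x ∘ ψ) q) : p = q := by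
  by_contra hpq
  obtain ⟨L, hL⟩ := hx.exists_tendsto_inner_sub hconv hdiff hp hq
  have hpL : ⟪p, g p - g q⟫ = L := tendsto_nhds_unique (hxp _) (hL.comp hφ.tendsto_atTop)
  have hqL : ⟪q, g p - g q⟫ = L := tendsto_nhds_unique (hxq _) (hL.comp hψ.tendsto_atTop)
  have := hesc.inner_sub_pos hdomConv hconv hdiff hp.2 hq.2 hpq
  rw [inner_sub_left, hpL, hqL, sub_self] at this
  exact this.false

end FwdBregmanMono

end Bregman

theorem FwdBregmanMono.isBounded_range {f : H → ℝ} {g : H → H} {dom C : Set H} {x : ℕ → H}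
    (hx : FwdBregmanMono f g dom C x) (hesc : EssStrictConvex f dom) (hdomConv : Convex ℝ dom)
    (hconv : ConvexOn ℝ dom f) (hlsc : LowerSemicontinuousOn f dom)
    (hdiff : ∀ x ∈ interior dom, GateauxAt f (g x) x) :
    Bornology.IsBounded (Set.range x) := by
  obtain ⟨c, hc⟩ := hx.1
  exact (hesc.isBounded_bregD_le hdomConv hconv hlsc hdiff hc.2 (bregD f g (x 0) c)).subset
    (Set.range_subset_iff.2 fun k =>
      ⟨interior_subset (hx.2.1 k), hx.antitone_bregD hc (Nat.zero_le k)⟩)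

theorem stmt4_general (f : H → ℝ) (g : H → H) (dom : Set H) (C : Set H)
    (hdomConv : Convex ℝ dom) (hconv : ConvexOn ℝ dom f)
    (hlsc : LowerSemicontinuousOn f dom)
    (hdiff : ∀ x ∈ interior dom, GateauxAt f (g x) x)
    (hesc : EssStrictConvex f dom)
    (x : ℕ → H) (hmono : FwdBregmanMono f g dom C x) :
    (∃ p ∈ C ∩ interior dom, WeakLim x p) ↔
      ∀ p : H, (∃ φ : ℕ → ℕ, StrictMono φ ∧ WeakLim (x ∘ φ) p) →
        p ∈ C ∩ interior dom := by
  have hbdd := hmono.isBounded_range hesc hdomConv hconv hlsc hdiff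
  constructor
  · rintro ⟨p, hp, hxp⟩ q ⟨φ, hφ, hxq⟩
    rwa [hxq.unique (hxp.comp hφ)]
  · intro hcl
    obtain ⟨p, φ, hφ, hxp⟩ := exists_strictMono_weakLim hbdd
    have hp := hcl p ⟨φ, hφ, hxp⟩
    refine ⟨p, hp, weakLim_of_forall_subseq fun φ' hφ' => ?_⟩
    obtain ⟨q, ψ, hψ, hxq⟩ :=
      exists_strictMono_weakLim (hbdd.subset (Set.range_comp_subset_range φ' x))
    have hq := hcl q ⟨φ' ∘ ψ, hφ'.comp hψ, hxq⟩
    have hpq := hmono.eq_of_weakLim_comp hesc hdomConv hconv hdiff hp hq hφ (hφ'.comp hψ) hxp hxq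
    exact ⟨ψ, hψ, hpq ▸ hxq⟩

theorem stmt4 (f : H → ℝ) (g : H → H) (dom : Set H) (C : Set H)
    (hdomConv : Convex ℝ dom) (hconv : ConvexOn ℝ dom f)
    (hlsc : LowerSemicontinuousOn f dom) (hproper : dom.Nonempty)
    (hint : (interior dom).Nonempty)
    (hdiff : ∀ x ∈ interior dom, GateauxAt f (g x) x)
    (hesc : EssStrictConvex f dom)
    (hC : IsClosed C) (hCconv : Convex ℝ C) (hCne : (C ∩ interior dom).Nonempty)
    (x : ℕ → H) (hmono : FwdBregmanMono f g dom C x) :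
    (∃ p ∈ C ∩ interior dom, WeakLim x p) ↔
      ∀ p : H, (∃ φ : ℕ → ℕ, StrictMono φ ∧ WeakLim (x ∘ φ) p) →
        p ∈ C ∩ interior dom :=
  stmt4_general f g dom C hdomConv hconv hlsc hdiff hesc x hmono
end

section
/- Let f be essentially strictly convex with D_f(x,y) = 0 ⟺ x = y for x ∈ H, y ∈ int dom f. Let T₁,...,T_m : H → H with (∩ᵢ Fix Tᵢ) ∩ int dom f ≠ ∅, and set S(x) = {x, T₁x, ..., T_mx}. Define the forward Bregman circumcenter mapping by: v ∈ CC_S(x) iff v ∈ aff(S(x)) ∩ int dom f and D_f(x,v) = D_f(T₁x,v) = ... = D_f(T_mx,v). Then Fix CC_S = int dom f ∩ (∩ᵢ Fix Tᵢ). -/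
open Filter Topology
open scoped RealInnerProductSpace

variable {H : Type*} [NormedAddCommGroup H] [InnerProductSpace ℝ H] [CompleteSpace H]

theorem stmt5 (f : H → ℝ) (g : H → H) (dom : Set H)
    (hdomConv : Convex ℝ dom) (hconv : ConvexOn ℝ dom f)
    (hlsc : LowerSemicontinuousOn f dom) (hproper : dom.Nonempty)
    (hint : (interior dom).Nonempty)
    (hdiff : ∀ x ∈ interior dom, GateauxAt f (g x) x)
    (hesc : EssStrictConvex f dom)
    (hD0 : ∀ x : H, ∀ y ∈ interior dom, (bregD f g x y = 0 ↔ x = y))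
    (m : ℕ) (hm : 0 < m) (T : Fin m → H → H)
    (hfix : ((⋂ i, {p : H | T i p = p}) ∩ interior dom).Nonempty) :
    {x : H | x ∈ (affineSpan ℝ (insert x (Set.range fun i => T i x)) : Set H) ∧
        x ∈ interior dom ∧ ∀ i : Fin m, bregD f g (T i x) x = bregD f g x x} =
      interior dom ∩ ⋂ i, {p : H | T i p = p} := by
  ext x
  simp only [Set.mem_setOf_eq, Set.mem_inter_iff, Set.mem_iInter]
  constructor
  · rintro ⟨-, hx, hD⟩
    refine ⟨hx, fun i => ?_⟩
    have h0 : bregD f g x x = 0 := (hD0 x x hx).mpr rfl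
    exact (hD0 (T i x) x hx).mp (by rw [hD i, h0])
  · rintro ⟨hx, hT⟩
    refine ⟨subset_affineSpan ℝ _ (Set.mem_insert x _), hx, fun i => by rw [hT i]⟩
end

section
/- Let c > 0 and μ > 0 with μ ≠ 1, and define h : (0,∞) → ℝ by h(t) = ln(c t^μ) - ln(t) + t^{1-μ}/c - 1. Then h(t) = 0 implies t = c t^μ, i.e. t = c^{-1/(μ-1)}. -/
/-! With `u = t ^ (1 - μ) / c`, the left-hand side of the hypothesis equals `u - 1 - log u`,
which vanishes on `(0, ∞)` only at `u = 1` since `log u < u - 1` for `u ≠ 1`. And `u = 1`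
means `t ^ (1 - μ) = c`, i.e. `t` is the fixed point of `t ↦ c t ^ μ`. -/

open Real

lemma Real.eq_one_of_log_eq_sub_one {x : ℝ} (hx : 0 < x) (h : log x = x - 1) : x = 1 := by
  by_contra hx1
  exact (log_lt_sub_one_of_pos hx hx1).ne h

lemma Real.log_mul_rpow_sub_log {c t : ℝ} (hc : 0 < c) (ht : 0 < t) (μ : ℝ) :
    log (c * t ^ μ) - log t = -log (t ^ (1 - μ) / c) := by
  rw [log_mul hc.ne' (rpow_pos_of_pos ht μ).ne',
    log_div (rpow_pos_of_pos ht _).ne' hc.ne', log_rpow ht, log_rpow ht]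
  ring

lemma Real.mul_rpow_eq_self_of_rpow_one_sub_eq {c t μ : ℝ} (ht : 0 < t)
    (h : t ^ (1 - μ) = c) : c * t ^ μ = t := by
  rw [← h, ← rpow_add ht, sub_add_cancel, rpow_one]

lemma Real.eq_rpow_of_rpow_one_sub_eq {c t μ : ℝ} (ht : 0 ≤ t) (hμ1 : μ ≠ 1)
    (h : t ^ (1 - μ) = c) : t = c ^ (-(1 / (μ - 1))) := by
  have hμ1' : μ - 1 ≠ 0 := sub_ne_zero.mpr hμ1
  rw [← h, ← rpow_mul ht, show (1 - μ) * -(1 / (μ - 1)) = 1 by field_simp; ring, rpow_one]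

theorem stmt11_general (c μ : ℝ) (hc : 0 < c) (hμ1 : μ ≠ 1)
    (t : ℝ) (ht : 0 < t)
    (h0 : Real.log (c * t ^ μ) - Real.log t + t ^ (1 - μ) / c - 1 = 0) :
    c * t ^ μ = t ∧ t = c ^ (-(1 / (μ - 1))) := by
  have hu : t ^ (1 - μ) / c = 1 :=
    eq_one_of_log_eq_sub_one (by positivity) (by linarith [log_mul_rpow_sub_log hc ht μ])
  have hfix : t ^ (1 - μ) = c := (div_eq_one_iff_eq hc.ne').mp hu
  exact ⟨mul_rpow_eq_self_of_rpow_one_sub_eq ht hfix, eq_rpow_of_rpow_one_sub_eq ht.le hμ1 hfix⟩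

theorem stmt11 (c μ : ℝ) (hc : 0 < c) (hμ : 0 < μ) (hμ1 : μ ≠ 1)
    (t : ℝ) (ht : 0 < t)
    (h0 : Real.log (c * t ^ μ) - Real.log t + t ^ (1 - μ) / c - 1 = 0) :
    c * t ^ μ = t ∧ t = c ^ (-(1 / (μ - 1))) :=
  stmt11_general c μ hc hμ1 t ht h0
end
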